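/- arXiv:1601.03782 — 3 statements merged into one kernel-verified Lean document; each statement's English description precedes it below -/
import Mathlib

section
/- The robustness of asymmetry is monotonically nonincreasing on average under selective operations that preserve symmetric states: let K_1, …, K_m be d×d complex matrices with ∑_{l=1}^m K_l† K_l = I, and suppose that for every symmetric state σ and every l the matrix K_l σ K_l† satisfies E(K_l σ K_l†) = K_l σ K_l†. Then for every state ρ, writing p_l = Tr[K_l ρ K_l†], one has RoA(ρ) ≥ ∑_{l : p_l > 0} p_l · RoA(K_l ρ K_l† / p_l). -/
open Matrix ComplexOrder

noncomputable section

/-- A state (density matrix): positive semidefinite with trace 1. -/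
def IsState {d : ℕ} (ρ : Matrix (Fin d) (Fin d) ℂ) : Prop :=
  ρ.PosSemidef ∧ ρ.trace = 1

/-- Group average of a matrix under a unitary representation. -/
def grpAvg {d : ℕ} {G : Type*} [Fintype G] [Group G]
    (U : G →* Matrix.unitaryGroup (Fin d) ℂ) (X : Matrix (Fin d) (Fin d) ℂ) :
    Matrix (Fin d) (Fin d) ℂ :=
  (Fintype.card G : ℂ)⁻¹ •
    ∑ g : G, (U g : Matrix (Fin d) (Fin d) ℂ) * X * ((U g : Matrix (Fin d) (Fin d) ℂ))ᴴ

/-- The robustness of asymmetry. -/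
def RoA {d : ℕ} {G : Type*} [Fintype G] [Group G]
    (U : G →* Matrix.unitaryGroup (Fin d) ℂ) (ρ : Matrix (Fin d) (Fin d) ℂ) : ℝ :=
  sInf { s : ℝ | 0 ≤ s ∧ ∃ σ : Matrix (Fin d) (Fin d) ℂ,
    IsState σ ∧ grpAvg U σ = σ ∧ ((1 + s) • σ - ρ).PosSemidef }

/-!
If `(1 + s) σ - ρ ≥ 0` with `σ` a symmetric state, conjugating by `K_l` gives
`(1 + s) K_l σ K_l† ≥ K_l ρ K_l†`, and by hypothesis `K_l σ K_l†`, normalized by its trace `q_l`,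
is again a symmetric state. Hence the `l`-th normalized post-measurement state has robustness at
most `(1 + s) q_l / p_l - 1`. Averaging with the weights `p_l` and using
`∑ q_l ≤ 1 = ∑_{p_l > 0} p_l` bounds the average by `s`; then take the infimum over `s`.
-/

namespace Matrix

variable {n 𝕜 : Type*} [Fintype n] [RCLike 𝕜]

lemma PosSemidef.re_trace_nonneg {A : Matrix n n 𝕜} (hA : A.PosSemidef) :
    0 ≤ RCLike.re A.trace :=
  (RCLike.nonneg_iff.mp hA.trace_nonneg).1

lemma PosSemidef.ofReal_re_trace {A : Matrix n n 𝕜} (hA : A.PosSemidef) :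
    (RCLike.re A.trace : 𝕜) = A.trace :=
  RCLike.ext (by simp) (by simp [(RCLike.nonneg_iff.mp hA.trace_nonneg).2])

open scoped MatrixOrder in
lemma PosSemidef.re_trace_smul_one_sub [DecidableEq n] {A : Matrix n n 𝕜} (hA : A.PosSemidef) :
    (RCLike.re A.trace • (1 : Matrix n n 𝕜) - A).PosSemidef := by
  rw [← le_iff, ← Algebra.algebraMap_eq_smul_one,
    le_algebraMap_iff_spectrum_le hA.isHermitian.isSelfAdjoint,
    hA.isHermitian.spectrum_real_eq_range_eigenvalues]
  rintro _ ⟨i, rfl⟩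
  rw [hA.isHermitian.trace_eq_sum_eigenvalues, map_sum]
  simp only [RCLike.ofReal_re]
  exact Finset.single_le_sum (fun j _ => hA.eigenvalues_nonneg j) (Finset.mem_univ i)

lemma sum_trace_mul_mul_conjTranspose [DecidableEq n] {ι : Type*} [Fintype ι]
    {K : ι → Matrix n n 𝕜} (hK : ∑ l, (K l)ᴴ * K l = 1) (X : Matrix n n 𝕜) :
    ∑ l, (K l * X * (K l)ᴴ).trace = X.trace := by
  simp_rw [trace_mul_cycle (K _) X, ← trace_sum, ← Finset.sum_mul, hK, one_mul]

end Matrix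

section State

variable {d : ℕ}

lemma IsState.dim_pos {ρ : Matrix (Fin d) (Fin d) ℂ} (hρ : IsState ρ) : 0 < d := by
  refine Nat.pos_of_ne_zero ?_
  rintro rfl
  simpa using hρ.2

lemma IsState.posSemidef_one_sub {ρ : Matrix (Fin d) (Fin d) ℂ} (hρ : IsState ρ) :
    (1 - ρ).PosSemidef := by
  simpa [hρ.2] using hρ.1.re_trace_smul_one_sub

lemma isState_inv_re_trace_smul {A : Matrix (Fin d) (Fin d) ℂ} (hA : A.PosSemidef)
    (hpos : 0 < A.trace.re) : IsState (A.trace.re⁻¹ • A) := by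
  refine ⟨hA.smul (inv_nonneg.mpr hpos.le), ?_⟩
  set p := A.trace.re
  have hp : (p : ℂ) = A.trace := hA.ofReal_re_trace
  rw [trace_smul, ← hp, Complex.real_smul, ← Complex.ofReal_mul,
    inv_mul_cancel₀ hpos.ne', Complex.ofReal_one]

lemma IsState.sum_re_trace_mul_mul_conjTranspose {ι : Type*} [Fintype ι]
    {K : ι → Matrix (Fin d) (Fin d) ℂ} (hK : ∑ l, (K l)ᴴ * K l = 1)
    {ρ : Matrix (Fin d) (Fin d) ℂ} (hρ : IsState ρ) :
    ∑ l, (K l * ρ * (K l)ᴴ).trace.re = 1 := by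
  rw [← Complex.re_sum, sum_trace_mul_mul_conjTranspose hK, hρ.2, Complex.one_re]

end State

section RoA

variable {d : ℕ} {G : Type*} [Fintype G] [Group G] (U : G →* Matrix.unitaryGroup (Fin d) ℂ)

lemma grpAvg_smul (r : ℝ) (X : Matrix (Fin d) (Fin d) ℂ) :
    grpAvg U (r • X) = r • grpAvg U X := by
  simp only [grpAvg, Matrix.mul_smul, Matrix.smul_mul]
  rw [← Finset.smul_sum, smul_comm]

lemma grpAvg_one : grpAvg U (1 : Matrix (Fin d) (Fin d) ℂ) = 1 := by
  have hU (g : G) :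
      (U g : Matrix (Fin d) (Fin d) ℂ) * 1 * (U g : Matrix (Fin d) (Fin d) ℂ)ᴴ = 1 := by
    rw [Matrix.mul_one, ← Matrix.star_eq_conjTranspose]
    exact Unitary.mul_star_self_of_mem (U g).2
  rw [grpAvg, Finset.sum_congr rfl fun g _ => hU g, Finset.sum_const, Finset.card_univ,
    ← Nat.cast_smul_eq_nsmul ℂ, smul_smul, inv_mul_cancel₀ (by exact_mod_cast Fintype.card_ne_zero),
    one_smul]

lemma RoA_le {ρ σ : Matrix (Fin d) (Fin d) ℂ} {s : ℝ} (hs : 0 ≤ s) (hσ : IsState σ)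
    (hσU : grpAvg U σ = σ) (hρσ : ((1 + s) • σ - ρ).PosSemidef) : RoA U ρ ≤ s :=
  csInf_le ⟨0, fun _ ht => ht.1⟩ ⟨hs, σ, hσ, hσU, hρσ⟩

lemma le_RoA {ρ : Matrix (Fin d) (Fin d) ℂ} (hρ : IsState ρ) {a : ℝ}
    (h : ∀ (s : ℝ) (σ : Matrix (Fin d) (Fin d) ℂ), 0 ≤ s → IsState σ → grpAvg U σ = σ →
      ((1 + s) • σ - ρ).PosSemidef → a ≤ s) :
    a ≤ RoA U ρ := by
  have hd : (1 : ℝ) ≤ d := by exact_mod_cast hρ.dim_pos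
  refine le_csInf ⟨d - 1, sub_nonneg.mpr hd, (d : ℝ)⁻¹ • 1, ?_, by rw [grpAvg_smul, grpAvg_one], ?_⟩
    fun s ⟨hs, σ, hσ, hσU, hρσ⟩ => h s σ hs hσ hσU hρσ
  · simpa using isState_inv_re_trace_smul (PosSemidef.one (n := Fin d) (R := ℂ))
      (by simpa using hρ.dim_pos)
  · rw [smul_smul, add_sub_cancel, mul_inv_cancel₀ (by positivity), one_smul]
    exact hρ.posSemidef_one_sub

lemma mul_RoA_inv_re_trace_smul_le {A B : Matrix (Fin d) (Fin d) ℂ}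
    (hB : B.PosSemidef) (hBU : grpAvg U B = B) {c : ℝ} (hAB : (c • B - A).PosSemidef)
    (hpos : 0 < A.trace.re) :
    A.trace.re * RoA U (A.trace.re⁻¹ • A) ≤ c * B.trace.re - A.trace.re := by
  set p := A.trace.re
  set q := B.trace.re
  have hpq : p ≤ c * q := by
    simpa [trace_sub, trace_smul, p, q] using hAB.re_trace_nonneg
  have hq : 0 < q := by
    refine lt_of_le_of_ne hB.re_trace_nonneg fun h => ?_
    rw [← h, mul_zero] at hpq
    linarith
  have hRoA : RoA U (p⁻¹ • A) ≤ c * q / p - 1 := by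
    refine RoA_le U (σ := q⁻¹ • B) ?_ (isState_inv_re_trace_smul hB hq)
      (by rw [grpAvg_smul, hBU]) ?_
    · rw [sub_nonneg, le_div_iff₀ hpos]
      linarith
    · convert hAB.smul (inv_nonneg.mpr hpos.le) using 1
      rw [smul_sub, smul_smul, smul_smul]
      congr 2
      field_simp
      ring
  calc p * RoA U (p⁻¹ • A) ≤ p * (c * q / p - 1) := mul_le_mul_of_nonneg_left hRoA hpos.le
    _ = c * q - p := by field_simp

end RoA

theorem roa_monotone_selective_general {d : ℕ} {G : Type*} [Fintype G] [Group G]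
    (U : G →* Matrix.unitaryGroup (Fin d) ℂ)
    {m : ℕ} (K : Fin m → Matrix (Fin d) (Fin d) ℂ)
    (hK : ∑ l, (K l)ᴴ * K l = 1)
    (hfree : ∀ σ : Matrix (Fin d) (Fin d) ℂ, IsState σ → grpAvg U σ = σ →
      ∀ l, grpAvg U (K l * σ * (K l)ᴴ) = K l * σ * (K l)ᴴ)
    (ρ : Matrix (Fin d) (Fin d) ℂ) (hρ : IsState ρ) :
    ∑ l ∈ Finset.univ.filter (fun l => 0 < (K l * ρ * (K l)ᴴ).trace.re),
        (K l * ρ * (K l)ᴴ).trace.re *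
          RoA U (((K l * ρ * (K l)ᴴ).trace.re)⁻¹ • (K l * ρ * (K l)ᴴ))
      ≤ RoA U ρ := by
  refine le_RoA U hρ fun s σ hs hσ hσU hρσ => ?_
  set P := Finset.univ.filter (fun l => 0 < (K l * ρ * (K l)ᴴ).trace.re)
  have hdom (l : Fin m) : ((1 + s) • (K l * σ * (K l)ᴴ) - K l * ρ * (K l)ᴴ).PosSemidef := by
    simpa only [Matrix.mul_sub, Matrix.sub_mul, Matrix.mul_smul, Matrix.smul_mul] using
      hρσ.mul_mul_conjTranspose_same (K l)
  have hσP : ∑ l ∈ P, (K l * σ * (K l)ᴴ).trace.re ≤ 1 :=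
    (Finset.sum_le_sum_of_subset_of_nonneg (Finset.filter_subset _ _) fun l _ _ =>
      (hσ.1.mul_mul_conjTranspose_same (K l)).re_trace_nonneg).trans_eq
      (hσ.sum_re_trace_mul_mul_conjTranspose hK)
  have hρP : ∑ l ∈ P, (K l * ρ * (K l)ᴴ).trace.re = 1 :=
    (Finset.sum_filter_of_ne fun l _ h =>
      lt_of_le_of_ne (hρ.1.mul_mul_conjTranspose_same (K l)).re_trace_nonneg h.symm).trans
      (hρ.sum_re_trace_mul_mul_conjTranspose hK)
  calc _ ≤ ∑ l ∈ P, ((1 + s) * (K l * σ * (K l)ᴴ).trace.re - (K l * ρ * (K l)ᴴ).trace.re) :=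
        Finset.sum_le_sum fun l hl => mul_RoA_inv_re_trace_smul_le U
          (hσ.1.mul_mul_conjTranspose_same _)
          (hfree σ hσ hσU l) (hdom l) (Finset.mem_filter.mp hl).2
    _ = (1 + s) * ∑ l ∈ P, (K l * σ * (K l)ᴴ).trace.re - ∑ l ∈ P, (K l * ρ * (K l)ᴴ).trace.re := by
        rw [Finset.sum_sub_distrib, Finset.mul_sum]
    _ ≤ s := by
        rw [hρP]
        nlinarith

theorem roa_monotone_selective {d : ℕ} (hd : 1 ≤ d) {G : Type*} [Fintype G] [Group G]
    (U : G →* Matrix.unitaryGroup (Fin d) ℂ)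
    {m : ℕ} (K : Fin m → Matrix (Fin d) (Fin d) ℂ)
    (hK : ∑ l, (K l)ᴴ * K l = 1)
    (hfree : ∀ σ : Matrix (Fin d) (Fin d) ℂ, IsState σ → grpAvg U σ = σ →
      ∀ l, grpAvg U (K l * σ * (K l)ᴴ) = K l * σ * (K l)ᴴ)
    (ρ : Matrix (Fin d) (Fin d) ℂ) (hρ : IsState ρ) :
    ∑ l ∈ Finset.univ.filter (fun l => 0 < (K l * ρ * (K l)ᴴ).trace.re),
        (K l * ρ * (K l)ᴴ).trace.re *
          RoA U (((K l * ρ * (K l)ᴴ).trace.re)⁻¹ • (K l * ρ * (K l)ᴴ))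
      ≤ RoA U ρ :=
  roa_monotone_selective_general U K hK hfree ρ hρ
end
end

section
/- Strong duality for the robustness of asymmetry: for every state ρ on ℂ^d there exists a positive semidefinite d×d complex matrix X with E(X) = I and Re Tr[Xρ] = 1 + RoA(ρ). -/
open Matrix ComplexOrder

noncomputable section

open scoped Pointwise ComplexStarModule

/-! Perturb the primal problem `1 + RoA(ρ) = inf {Tr τ | E(τ) = τ, τ ≥ ρ}` to the value function
`v(A) = inf {Tr τ | E(τ) = τ, τ ≥ A}` on Hermitian matrices. It is finite and sublinear, hence
convex and (in finite dimension) continuous, so Hahn–Banach gives a Hermitian subgradient `X` of `v`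
at `ρ`. Since `v(ρ - P) ≤ v(ρ)` for `P ≥ 0`, `X ≥ 0`; since `v(ρ + S) ≤ v(ρ) + Tr S` for symmetric
`S`, `Tr(XS) = Tr S` on the range of the self-adjoint projection `E`, which forces `E(X) = 1`;
and positive homogeneity of `v` gives `Tr(Xρ) = v(ρ)`. -/

theorem ConvexOn.exists_subgradient {E : Type*} [AddCommGroup E] [Module ℝ E]
    [TopologicalSpace E] [IsTopologicalAddGroup E] [ContinuousSMul ℝ E] {g : E → ℝ}
    (hg : ConvexOn ℝ Set.univ g) (hcont : Continuous g) (x₀ : E) :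
    ∃ f : StrongDual ℝ E, ∀ x, g x₀ + f (x - x₀) ≤ g x := by
  obtain ⟨φ, hφ⟩ := geometric_hahn_banach_open_point hg.convex_strict_epigraph
    (by simpa using isOpen_lt (hcont.comp continuous_fst) continuous_snd)
    (x := (x₀, g x₀)) (by simp)
  set l := φ (0, 1)
  have hφ_apply (x : E) (t : ℝ) : φ (x, t) = φ (x, 0) + t * l := by
    rw [← smul_eq_mul, ← map_smul, ← map_add]; simp
  have hl : l < 0 := by
    have := hφ (x₀, g x₀ + 1) (by simp)
    rw [hφ_apply, hφ_apply x₀ (g x₀)] at this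
    linarith
  refine ⟨(-l)⁻¹ • φ.comp (ContinuousLinearMap.inl ℝ E ℝ), fun x => ?_⟩
  -- else some point of the open epigraph above `x` lies on the hyperplane `φ = φ (x₀, g x₀)`
  have key : φ (x, 0) - φ (x₀, 0) ≤ l * g x₀ - l * g x := by
    by_contra! h
    have hdiv : (φ (x, 0) - φ (x₀, 0)) / l < g x₀ - g x := by
      rw [div_lt_iff_of_neg hl]; linarith
    have := hφ (x, g x₀ - (φ (x, 0) - φ (x₀, 0)) / l) ⟨trivial, by simp only; linarith⟩
    rw [hφ_apply, hφ_apply x₀ (g x₀), sub_mul, div_mul_cancel₀ _ hl.ne] at this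
    linarith
  have : -l⁻¹ * (φ (x, 0) - φ (x₀, 0)) ≤ g x - g x₀ := by
    rw [← inv_neg, inv_mul_le_iff₀ (by linarith)]; linarith
  simp only [inv_neg, map_sub, _root_.smul_apply, ContinuousLinearMap.comp_apply,
    ContinuousLinearMap.inl_apply, smul_eq_mul, neg_mul, sub_neg_eq_add]
  linarith

theorem Real.le_mul_sInf_add {s : Set ℝ} (hs : s.Nonempty) {a b c : ℝ} (ha : 0 ≤ a)
    (h : ∀ x ∈ s, c ≤ a * x + b) : c ≤ a * sInf s + b := by
  suffices c - b ≤ sInf (a • s) by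
    rwa [Real.sInf_smul_of_nonneg ha, smul_eq_mul, sub_le_iff_le_add] at this
  refine le_csInf hs.smul_set ?_
  rintro _ ⟨x, hx, rfl⟩
  linarith [h x hx, smul_eq_mul a x]

namespace Matrix

variable {n : Type*} [Fintype n]

theorem exists_trace_mul_eq [DecidableEq n] {R : Type*} [CommSemiring R]
    (f : Matrix n n R →ₗ[R] R) : ∃ B : Matrix n n R, ∀ S, f S = (B * S).trace := by
  let B : Matrix n n R := .of fun i j => f (single j i 1)
  have : f = traceLinearMap n R R ∘ₗ LinearMap.mulLeft R B :=
    ext_linearMap R fun i j => LinearMap.ext_ring (by simp [B, trace_mul_single])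
  exact ⟨B, fun S => congr($this S)⟩

theorem exists_re_trace_mul_eq [DecidableEq n] (f : Matrix n n ℂ →ₗ[ℝ] ℝ) :
    ∃ B : Matrix n n ℂ, ∀ S, f S = (B * S).trace.re := by
  obtain ⟨B, hB⟩ := exists_trace_mul_eq (Module.Dual.extendRCLike (𝕜 := ℂ) f)
  exact ⟨B, fun S => by rw [← hB]; exact (Module.Dual.re_extendRCLike_apply (𝕜 := ℂ) f S).symm⟩

theorem re_trace_realPart_mul (B : Matrix n n ℂ) {S : Matrix n n ℂ} (hS : S.IsHermitian) :
    ((ℜ B : Matrix n n ℂ) * S).trace.re = (B * S).trace.re := by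
  have : (Bᴴ * S).trace = star (B * S).trace := by
    rw [← trace_conjTranspose, conjTranspose_mul, hS.eq, trace_mul_comm]
  rw [realPart_apply_coe, smul_mul_assoc, trace_smul, add_mul, trace_add, star_eq_conjTranspose,
    this, Complex.smul_re, Complex.add_re, Complex.star_def, Complex.conj_re, smul_eq_mul]
  ring

theorem IsHermitian.exists_posSemidef_smul_one_sub [DecidableEq n] {A : Matrix n n ℂ}
    (hA : A.IsHermitian) : ∃ c : ℝ, (c • 1 - A).PosSemidef := by
  open scoped Matrix.Norms.L2Operator MatrixOrder in
  have hA' : IsSelfAdjoint A := hA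
  exact ⟨‖A‖, by simpa [le_iff, Algebra.algebraMap_eq_smul_one] using
    hA'.le_algebraMap_norm_self⟩

theorem posSemidef_of_forall_re_trace_mul_nonneg {𝕜 : Type*} [RCLike 𝕜] {X : Matrix n n 𝕜}
    (hX : X.IsHermitian) (h : ∀ P : Matrix n n 𝕜, P.PosSemidef → 0 ≤ RCLike.re (X * P).trace) :
    X.PosSemidef := by
  refine .of_dotProduct_mulVec_nonneg hX fun x => ?_
  have := h _ (posSemidef_vecMulVec_self_star x)
  rw [mul_vecMulVec, trace_vecMulVec, dotProduct_comm] at this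
  exact RCLike.nonneg_iff.mpr ⟨this, hX.im_star_dotProduct_mulVec_self x⟩

end Matrix

section GroupAverage

variable {d : ℕ} {G : Type*} [Fintype G] [Group G] (U : G →* unitaryGroup (Fin d) ℂ)

local notation "M" => Matrix (Fin d) (Fin d) ℂ

lemma grpAvg_add (X Y : M) : grpAvg U (X + Y) = grpAvg U X + grpAvg U Y := by
  simp [grpAvg, mul_add, add_mul, Finset.sum_add_distrib]

lemma grpAvg_smul_s5 (c : ℝ) (X : M) : grpAvg U (c • X) = c • grpAvg U X := by
  simp [grpAvg, Finset.smul_sum, smul_comm c]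

lemma grpAvg_zero : grpAvg U (0 : M) = 0 := by
  simpa using grpAvg_smul_s5 U 0 0

lemma grpAvg_neg (X : M) : grpAvg U (-X) = -grpAvg U X := by
  simpa using grpAvg_smul_s5 U (-1) X

lemma grpAvg_sub (X Y : M) : grpAvg U (X - Y) = grpAvg U X - grpAvg U Y := by
  rw [sub_eq_add_neg, grpAvg_add, grpAvg_neg, ← sub_eq_add_neg]

lemma grpAvg_one_s5 : grpAvg U (1 : M) = 1 := by
  simp [grpAvg, ← star_eq_conjTranspose, ← Nat.cast_smul_eq_nsmul ℂ, smul_smul]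

lemma mul_grpAvg_mul_conjTranspose (h : G) (X : M) :
    (U h : M) * grpAvg U X * (U h : M)ᴴ = grpAvg U X := by
  simp only [grpAvg, mul_smul_comm, smul_mul_assoc, Finset.mul_sum, Finset.sum_mul]
  congr 1
  refine Fintype.sum_equiv (Equiv.mulLeft h) _ _ fun g => ?_
  simp [conjTranspose_mul, mul_assoc]

lemma grpAvg_grpAvg (X : M) : grpAvg U (grpAvg U X) = grpAvg U X := by
  conv_lhs => rw [grpAvg]
  simp [mul_grpAvg_mul_conjTranspose, ← Nat.cast_smul_eq_nsmul ℂ, smul_smul]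

lemma trace_grpAvg_mul (A B : M) : (grpAvg U A * B).trace = (A * grpAvg U B).trace := by
  simp only [grpAvg, smul_mul_assoc, mul_smul_comm, trace_smul, Finset.sum_mul, Finset.mul_sum,
    trace_sum]
  congr 1
  refine Fintype.sum_equiv (Equiv.inv G) _ _ fun g => ?_
  simp only [Equiv.inv_apply, map_inv, Matrix.UnitaryGroup.inv_val, star_eq_conjTranspose,
    conjTranspose_conjTranspose, mul_assoc]
  rw [trace_mul_comm]
  simp only [mul_assoc]

lemma isHermitian_grpAvg {X : M} (hX : X.IsHermitian) : (grpAvg U X).IsHermitian := by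
  simp [grpAvg, IsHermitian, conjTranspose_sum, hX.eq, mul_assoc]

lemma grpAvg_eq_of_forall_re_trace_mul_eq {X Y : M} (hX : X.IsHermitian) (hY : Y.IsHermitian)
    (h : ∀ S : M, S.IsHermitian → grpAvg U S = S → (X * S).trace.re = (Y * S).trace.re) :
    grpAvg U X = grpAvg U Y := by
  set S := grpAvg U (X - Y) with hS_def
  have hS : S.IsHermitian := isHermitian_grpAvg U (hX.sub hY)
  have hre : (Sᴴ * S).trace.re = 0 := by
    rw [hS.eq, hS_def, trace_grpAvg_mul, ← hS_def, grpAvg_grpAvg, sub_mul, trace_sub,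
      Complex.sub_re, h S hS (grpAvg_grpAvg U _), sub_self]
  have him : (Sᴴ * S).trace.im = 0 :=
    ((Complex.nonneg_iff.mp (posSemidef_conjTranspose_mul_self S).trace_nonneg).2).symm
  rw [← sub_eq_zero, ← grpAvg_sub, ← hS_def, ← trace_conjTranspose_mul_self_eq_zero_iff]
  exact Complex.ext hre him

end GroupAverage

section Majorant

variable {d : ℕ} {G : Type*} [Fintype G] [Group G] (U : G →* unitaryGroup (Fin d) ℂ)

local notation "M" => Matrix (Fin d) (Fin d) ℂ

def majorantTraces (A : M) : Set ℝ :=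
  {r | ∃ τ : M, grpAvg U τ = τ ∧ (τ - A).PosSemidef ∧ τ.trace.re = r}

def majorantValue (A : M) : ℝ := sInf (majorantTraces U A)

def IsMajorantSubgradient (ρ X : M) : Prop :=
  ∀ A : M, A.IsHermitian → majorantValue U ρ + (X * (A - ρ)).trace.re ≤ majorantValue U A

variable {U} {ρ X : Matrix (Fin d) (Fin d) ℂ}

lemma trace_re_le_of_mem_majorantTraces {A : M} {r : ℝ} (hr : r ∈ majorantTraces U A) :
    A.trace.re ≤ r := by
  obtain ⟨τ, -, hτA, rfl⟩ := hr
  have := (Complex.nonneg_iff.mp hτA.trace_nonneg).1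
  rw [trace_sub, Complex.sub_re] at this
  linarith

lemma majorantTraces_nonempty {A : M} (hA : A.IsHermitian) : (majorantTraces U A).Nonempty := by
  obtain ⟨c, hc⟩ := hA.exists_posSemidef_smul_one_sub
  exact ⟨_, c • 1, by rw [grpAvg_smul_s5, grpAvg_one_s5], hc, rfl⟩

lemma majorantValue_le {A τ : M} (hτ : grpAvg U τ = τ) (hτA : (τ - A).PosSemidef) :
    majorantValue U A ≤ τ.trace.re :=
  csInf_le ⟨A.trace.re, fun _ => trace_re_le_of_mem_majorantTraces⟩ ⟨τ, hτ, hτA, rfl⟩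

lemma majorantValue_smul_add_smul_le {A B : M} (hA : A.IsHermitian) (hB : B.IsHermitian)
    {a b : ℝ} (ha : 0 ≤ a) (hb : 0 ≤ b) :
    majorantValue U (a • A + b • B) ≤ a * majorantValue U A + b * majorantValue U B := by
  rw [add_comm (a * _)]
  refine Real.le_mul_sInf_add (s := majorantTraces U B) (majorantTraces_nonempty hB) hb
    fun s ⟨σ, hσ, hσB, hs⟩ => ?_
  rw [add_comm (b * s)]
  refine Real.le_mul_sInf_add (s := majorantTraces U A) (majorantTraces_nonempty hA) ha
    fun r ⟨τ, hτ, hτA, hr⟩ => ?_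
  have hsum : a • τ + b • σ - (a • A + b • B) = a • (τ - A) + b • (σ - B) := by
    simp only [smul_sub]; abel
  calc majorantValue U (a • A + b • B) ≤ (a • τ + b • σ).trace.re :=
        majorantValue_le (by rw [grpAvg_add, grpAvg_smul_s5, grpAvg_smul_s5, hτ, hσ])
          (hsum ▸ (hτA.smul ha).add (hσB.smul hb))
    _ = a * r + b * s := by simp [trace_add, trace_smul, hr, hs]

lemma majorantTraces_eq_image_RoA (hρ : IsState ρ) :
    majorantTraces U ρ = (1 + ·) '' { s : ℝ | 0 ≤ s ∧ ∃ σ : M,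
      IsState σ ∧ grpAvg U σ = σ ∧ ((1 + s) • σ - ρ).PosSemidef } := by
  ext r
  constructor
  · intro hr
    obtain ⟨τ, hτ, hτρ, rfl⟩ := id hr
    have hr1 : 1 ≤ τ.trace.re := by simpa [hρ.2] using trace_re_le_of_mem_majorantTraces hr
    have hτ_psd : τ.PosSemidef := by simpa using hτρ.add hρ.1
    have hτ_tr : τ.trace = τ.trace.re :=
      Complex.eq_re_of_ofReal_le (r := 0) (by simpa using hτ_psd.trace_nonneg)
    set t := τ.trace.re
    refine ⟨t - 1, ⟨by linarith, t⁻¹ • τ,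
      ⟨hτ_psd.smul (by positivity), ?_⟩, by rw [grpAvg_smul_s5, hτ], ?_⟩, by ring⟩
    · rw [trace_smul, hτ_tr, Complex.real_smul, ← Complex.ofReal_mul,
        inv_mul_cancel₀ (by positivity), Complex.ofReal_one]
    · rwa [smul_smul, add_sub_cancel, mul_inv_cancel₀ (by positivity), one_smul]
  · rintro ⟨s, ⟨-, σ, hσ, hσsym, hσρ⟩, rfl⟩
    exact ⟨(1 + s) • σ, by rw [grpAvg_smul_s5, hσsym], hσρ, by simp [trace_smul, hσ.2]⟩

lemma majorantValue_eq_one_add_RoA (hρ : IsState ρ) :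
    majorantValue U ρ = 1 + RoA U ρ := by
  have hne := majorantTraces_nonempty (U := U) hρ.1.isHermitian
  rw [majorantTraces_eq_image_RoA hρ, Set.image_nonempty] at hne
  rw [majorantValue, majorantTraces_eq_image_RoA hρ, RoA]
  exact (Monotone.map_csInf_of_continuousAt (by fun_prop) (fun _ _ h => by simpa using h) hne
    ⟨0, fun _ hs => hs.1⟩).symm

lemma convexOn_majorantValue_realPart :
    ConvexOn ℝ Set.univ fun A : M => majorantValue U (ℜ A) :=
  ⟨convex_univ, fun A _ B _ a b ha hb _ => by
    simpa using majorantValue_smul_add_smul_le (ℜ A).2 (ℜ B).2 ha hb⟩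

lemma exists_isHermitian_subgradient (hρ : ρ.IsHermitian) :
    ∃ X : M, X.IsHermitian ∧ IsMajorantSubgradient U ρ X := by
  have hcont : Continuous fun A : M => majorantValue U (ℜ A) := by
    let _ := Matrix.normedAddCommGroup (n := Fin d) (m := Fin d) (α := ℂ)
    let _ := Matrix.normedSpace (n := Fin d) (m := Fin d) (α := ℂ) (R := ℝ)
    exact continuousOn_univ.mp (convexOn_majorantValue_realPart.continuousOn isOpen_univ)
  obtain ⟨f, hf⟩ := convexOn_majorantValue_realPart.exists_subgradient hcont ρ
  obtain ⟨B, hB⟩ := exists_re_trace_mul_eq f.toLinearMap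
  refine ⟨ℜ B, (ℜ B).2, fun A hA => ?_⟩
  have := hf A
  rwa [IsSelfAdjoint.coe_realPart hA, IsSelfAdjoint.coe_realPart hρ,
    ← ContinuousLinearMap.coe_coe, hB, ← re_trace_realPart_mul B (hA.sub hρ)] at this

lemma posSemidef_of_subgradient (hρ : ρ.IsHermitian) (hX : X.IsHermitian)
    (hsub : IsMajorantSubgradient U ρ X) : X.PosSemidef := by
  refine posSemidef_of_forall_re_trace_mul_nonneg hX fun P hP => ?_
  have h₁ := hsub (ρ - P) (hρ.sub hP.isHermitian)
  have h₂ := majorantValue_smul_add_smul_le (U := U) hρ hP.isHermitian.neg zero_le_one zero_le_one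
  have h₃ : majorantValue U (-P) ≤ 0 := by
    simpa using majorantValue_le (U := U) (grpAvg_zero U) (A := -P) (by simpa using hP)
  simp only [one_smul, one_mul, ← sub_eq_add_neg] at h₂
  simp only [sub_sub_cancel_left, mul_neg, trace_neg, Complex.neg_re] at h₁
  simp only [RCLike.re_to_complex]
  linarith

lemma grpAvg_eq_one_of_subgradient (hρ : ρ.IsHermitian) (hX : X.IsHermitian)
    (hsub : IsMajorantSubgradient U ρ X) : grpAvg U X = 1 := by
  have hle : ∀ S : Matrix (Fin d) (Fin d) ℂ, S.IsHermitian → grpAvg U S = S →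
      (X * S).trace.re ≤ S.trace.re := by
    intro S hS hSsym
    have h₁ := hsub (ρ + S) (hρ.add hS)
    have h₂ := majorantValue_smul_add_smul_le (U := U) hρ hS zero_le_one zero_le_one
    have h₃ : majorantValue U S ≤ S.trace.re := majorantValue_le hSsym (by simpa using .zero)
    simp only [one_smul, one_mul] at h₂
    simp only [add_sub_cancel_left] at h₁
    linarith
  rw [← grpAvg_one_s5 U]
  refine grpAvg_eq_of_forall_re_trace_mul_eq U hX isHermitian_one fun S hS hSsym => ?_
  have h := hle (-S) hS.neg (by rw [grpAvg_neg, hSsym])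
  simp only [mul_neg, trace_neg, Complex.neg_re] at h
  rw [one_mul]
  linarith [hle S hS hSsym]

lemma re_trace_mul_eq_of_subgradient (hρ : ρ.IsHermitian) (hsub : IsMajorantSubgradient U ρ X) :
    (X * ρ).trace.re = majorantValue U ρ := by
  have h₁ := hsub ((2 : ℝ) • ρ) (by simpa [two_smul] using hρ.add hρ)
  have h₂ : majorantValue U ((2 : ℝ) • ρ) ≤ 2 * majorantValue U ρ := by
    simpa using majorantValue_smul_add_smul_le (U := U) hρ isHermitian_zero zero_le_two le_rfl
  have h₃ := hsub 0 isHermitian_zero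
  have h₄ : majorantValue U 0 ≤ 0 := by
    simpa using majorantValue_le (U := U) (grpAvg_zero U) (A := 0) (by simpa using .zero)
  rw [two_smul, add_sub_cancel_right, ← two_smul ℝ] at h₁
  simp only [zero_sub, mul_neg, trace_neg, Complex.neg_re] at h₃
  linarith

end Majorant

theorem roa_strong_duality_general {d : ℕ} {G : Type*} [Fintype G] [Group G]
    (U : G →* Matrix.unitaryGroup (Fin d) ℂ)
    (ρ : Matrix (Fin d) (Fin d) ℂ) (hρ : IsState ρ) :
    ∃ X : Matrix (Fin d) (Fin d) ℂ, X.PosSemidef ∧ grpAvg U X = 1 ∧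
      (X * ρ).trace.re = 1 + RoA U ρ := by
  have hρ_herm := hρ.1.isHermitian
  obtain ⟨X, hX, hsub⟩ := exists_isHermitian_subgradient (U := U) hρ_herm
  refine ⟨X, posSemidef_of_subgradient hρ_herm hX hsub,
    grpAvg_eq_one_of_subgradient hρ_herm hX hsub, ?_⟩
  rw [re_trace_mul_eq_of_subgradient hρ_herm hsub, majorantValue_eq_one_add_RoA hρ]

theorem roa_strong_duality {d : ℕ} (hd : 1 ≤ d) {G : Type*} [Fintype G] [Group G]
    (U : G →* Matrix.unitaryGroup (Fin d) ℂ)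
    (ρ : Matrix (Fin d) (Fin d) ℂ) (hρ : IsState ρ) :
    ∃ X : Matrix (Fin d) (Fin d) ℂ, X.PosSemidef ∧ grpAvg U X = 1 ∧
      (X * ρ).trace.re = 1 + RoA U ρ :=
  roa_strong_duality_general U ρ hρ
end
end

section
/- Exact robustness of coherence for phase-alignable states: let d ≥ 2 and let ρ be a state on ℂ^d such that there exist real phases φ_0, …, φ_{d−1} with e^{i(φ_i − φ_j)}·ρ_{ij} = |ρ_{ij}| for all i, j (i.e., a diagonal unitary maps ρ to the matrix of absolute values of its entries). Then RoC(ρ) = C_ℓ1(ρ). -/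
open Matrix ComplexOrder

noncomputable section

/-- The robustness of coherence (with respect to the standard basis). -/
def RoC {d : ℕ} (ρ : Matrix (Fin d) (Fin d) ℂ) : ℝ :=
  sInf { s : ℝ | 0 ≤ s ∧ ∃ δ : Matrix (Fin d) (Fin d) ℂ,
    IsState δ ∧ δ.IsDiag ∧ ((1 + s) • δ - ρ).PosSemidef }

/-- The ℓ₁-norm of coherence: sum of absolute values of off-diagonal entries. -/
def Cl1 {d : ℕ} (ρ : Matrix (Fin d) (Fin d) ℂ) : ℝ :=
  ∑ i, ∑ j, if i = j then 0 else ‖ρ i j‖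

/-!
The witness `δ = diag(∑ⱼ ‖ρᵢⱼ‖) / (1 + C_ℓ1(ρ))` gives `RoC ρ ≤ C_ℓ1(ρ)` for every state: the matrix
`diag(∑ⱼ ‖ρᵢⱼ‖) - ρ` is Hermitian and diagonally dominant, so by Gershgorin its eigenvalues are
nonnegative. Conversely, for the phase vector `xᵢ = e^{-iφᵢ}` one has `x* δ x = tr δ = 1` for any
incoherent state `δ` and, by phase alignment, `x* ρ x = ∑ᵢⱼ ‖ρᵢⱼ‖ = 1 + C_ℓ1(ρ)`; testing
`(1 + s) δ - ρ ⪰ 0` on `x` gives `s ≥ C_ℓ1(ρ)`.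
-/

namespace Matrix

variable {𝕜 n : Type*} [RCLike 𝕜] [Fintype n]

theorem star_dotProduct_mulVec_eq_sum_sum_norm {A : Matrix n n 𝕜} {x : n → 𝕜}
    (hx : ∀ i j, star (x i) * A i j * x j = ‖A i j‖) :
    star x ⬝ᵥ A *ᵥ x = ∑ i, ∑ j, (‖A i j‖ : 𝕜) := by
  simp only [dotProduct, mulVec, Finset.mul_sum, Pi.star_apply, ← mul_assoc, hx]

variable [DecidableEq n]

theorem IsHermitian.posSemidef_of_sum_norm_offDiag_le {A : Matrix n n 𝕜} (hA : A.IsHermitian)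
    (hdom : ∀ i, ∑ j ∈ Finset.univ.erase i, ‖A i j‖ ≤ RCLike.re (A i i)) : A.PosSemidef := by
  refine hA.posSemidef_iff_eigenvalues_nonneg.mpr fun i => ?_
  have hμ : Module.End.HasEigenvalue (toLin' A) (hA.eigenvalues i : 𝕜) := by
    rw [Module.End.hasEigenvalue_iff_mem_spectrum, spectrum_toLin']
    exact (spectrum.algebraMap_mem_iff 𝕜).mpr (hA.eigenvalues_mem_spectrum_real i)
  obtain ⟨k, hk⟩ := eigenvalue_mem_ball hμ
  rw [Metric.mem_closedBall, dist_comm, dist_eq_norm] at hk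
  have hre := RCLike.re_le_norm (A k k - hA.eigenvalues i)
  rw [map_sub, RCLike.ofReal_re] at hre
  simp only [Pi.zero_apply]
  linarith [hdom k]

theorem IsHermitian.posSemidef_diagonal_sum_norm_sub {A : Matrix n n 𝕜} (hA : A.IsHermitian) :
    (diagonal (fun i => ((∑ j, ‖A i j‖ : ℝ) : 𝕜)) - A).PosSemidef := by
  refine IsHermitian.posSemidef_of_sum_norm_offDiag_le
    ((isHermitian_diagonal_of_self_adjoint _ ?_).sub hA) fun i => ?_
  · ext i
    simp
  · have hoff : ∀ j ∈ Finset.univ.erase i,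
        ‖(diagonal (fun i => ((∑ j, ‖A i j‖ : ℝ) : 𝕜)) - A) i j‖ = ‖A i j‖ := fun j hj => by
      rw [sub_apply, diagonal_apply_ne _ (Finset.ne_of_mem_erase hj).symm, zero_sub, norm_neg]
    rw [Finset.sum_congr rfl hoff, sub_apply, diagonal_apply_eq, map_sub, RCLike.ofReal_re,
      ← Finset.add_sum_erase _ _ (Finset.mem_univ i)]
    linarith [RCLike.re_le_norm (A i i)]

theorem IsDiag.star_dotProduct_mulVec_of_norm_eq_one {σ : Matrix n n 𝕜} (hσ : σ.IsDiag)
    {x : n → 𝕜} (hx : ∀ i, ‖x i‖ = 1) : star x ⬝ᵥ σ *ᵥ x = σ.trace := by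
  rw [← hσ.diagonal_diag, trace_diagonal]
  refine Finset.sum_congr rfl fun i _ => ?_
  rw [mulVec_diagonal, Pi.star_apply, RCLike.star_def, mul_left_comm, RCLike.conj_mul, hx,
    diag_apply]
  simp

end Matrix

theorem sum_sum_norm_eq_sum_norm_diag_add_Cl1 {d : ℕ} (ρ : Matrix (Fin d) (Fin d) ℂ) :
    ∑ i, ∑ j, ‖ρ i j‖ = ∑ i, ‖ρ i i‖ + Cl1 ρ := by
  rw [Cl1, ← Finset.sum_add_distrib]
  refine Finset.sum_congr rfl fun i _ => ?_
  rw [Finset.sum_ite, Finset.sum_const_zero, zero_add, Finset.filter_ne]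
  exact (Finset.add_sum_erase _ (fun j => ‖ρ i j‖) (Finset.mem_univ i)).symm

theorem Cl1_nonneg {d : ℕ} (ρ : Matrix (Fin d) (Fin d) ℂ) : 0 ≤ Cl1 ρ :=
  Finset.sum_nonneg fun _ _ => Finset.sum_nonneg fun _ _ => by split_ifs <;> positivity

namespace IsState

variable {d : ℕ} {ρ : Matrix (Fin d) (Fin d) ℂ}

theorem sum_norm_diag (hρ : IsState ρ) : ∑ i, ‖ρ i i‖ = 1 := by
  have h : ((∑ i, ‖ρ i i‖ : ℝ) : ℂ) = ρ.trace := by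
    push_cast
    exact Finset.sum_congr rfl fun i _ => RCLike.norm_of_nonneg' hρ.1.diag_nonneg
  exact_mod_cast h.trans hρ.2

theorem sum_sum_norm (hρ : IsState ρ) : ∑ i, ∑ j, ‖ρ i j‖ = 1 + Cl1 ρ := by
  rw [sum_sum_norm_eq_sum_norm_diag_add_Cl1, hρ.sum_norm_diag]

end IsState

def IsRoCBound {d : ℕ} (ρ : Matrix (Fin d) (Fin d) ℂ) (s : ℝ) : Prop :=
  0 ≤ s ∧ ∃ δ : Matrix (Fin d) (Fin d) ℂ, IsState δ ∧ δ.IsDiag ∧ ((1 + s) • δ - ρ).PosSemidef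

theorem RoC_eq_sInf {d : ℕ} (ρ : Matrix (Fin d) (Fin d) ℂ) :
    RoC ρ = sInf {s | IsRoCBound ρ s} :=
  rfl

section

variable {d : ℕ} {ρ : Matrix (Fin d) (Fin d) ℂ}

theorem IsState.isRoCBound_Cl1 (hρ : IsState ρ) : IsRoCBound ρ (Cl1 ρ) := by
  set r : Fin d → ℝ := fun i => ∑ j, ‖ρ i j‖
  have hc : 0 < 1 + Cl1 ρ := by linarith [Cl1_nonneg ρ]
  refine ⟨Cl1_nonneg ρ, diagonal fun i => ((r i / (1 + Cl1 ρ) : ℝ) : ℂ), ⟨?_, ?_⟩,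
    isDiag_diagonal _, ?_⟩
  · rw [posSemidef_diagonal_iff]
    exact fun i => mod_cast div_nonneg (Finset.sum_nonneg fun _ _ => norm_nonneg _) hc.le
  · rw [trace_diagonal, ← Complex.ofReal_sum, ← Finset.sum_div, hρ.sum_sum_norm, div_self hc.ne',
      Complex.ofReal_one]
  · have hscale : (1 + Cl1 ρ) • (fun i => ((r i / (1 + Cl1 ρ) : ℝ) : ℂ)) = fun i => (r i : ℂ) :=
      funext fun i => by
        rw [Pi.smul_apply, Complex.real_smul, ← Complex.ofReal_mul, mul_div_cancel₀ _ hc.ne']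
    rw [← diagonal_smul, hscale]
    exact hρ.1.1.posSemidef_diagonal_sum_norm_sub

theorem IsState.Cl1_le_of_isRoCBound (hρ : IsState ρ) {φ : Fin d → ℝ}
    (hφ : ∀ i j, Complex.exp (Complex.I * (φ i - φ j)) * ρ i j = ((‖ρ i j‖ : ℝ) : ℂ)) {s : ℝ}
    (hs : IsRoCBound ρ s) : Cl1 ρ ≤ s := by
  obtain ⟨-, δ, hδ, hδdiag, hpsd⟩ := hs
  set x : Fin d → ℂ := fun i => Complex.exp ((-φ i : ℝ) * Complex.I)
  have hx : ∀ i, ‖x i‖ = 1 := fun i => Complex.norm_exp_ofReal_mul_I _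
  have hρx : ∀ i j, star (x i) * ρ i j * x j = ‖ρ i j‖ := fun i j => by
    rw [← hφ i j]
    simp only [x, Complex.star_def, ← Complex.exp_conj, mul_right_comm _ (ρ i j), ← Complex.exp_add]
    congr 2
    rw [map_mul, Complex.conj_ofReal, Complex.conj_I]
    push_cast
    ring
  have h := hpsd.dotProduct_mulVec_nonneg x
  rw [sub_mulVec, dotProduct_sub, smul_mulVec, dotProduct_smul,
    hδdiag.star_dotProduct_mulVec_of_norm_eq_one hx, hδ.2,
    star_dotProduct_mulVec_eq_sum_sum_norm hρx] at h
  have hnonneg : (0 : ℂ) ≤ ((s - Cl1 ρ : ℝ) : ℂ) := by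
    rw [← add_sub_add_left_eq_sub _ _ 1, ← hρ.sum_sum_norm]
    push_cast
    simpa [Complex.real_smul] using h
  linarith [Complex.zero_le_real.mp hnonneg]

end

theorem roc_eq_l1_phase_alignable_general {d : ℕ}
    (ρ : Matrix (Fin d) (Fin d) ℂ) (hρ : IsState ρ)
    (φ : Fin d → ℝ)
    (hφ : ∀ i j, Complex.exp (Complex.I * (φ i - φ j)) * ρ i j
      = ((‖ρ i j‖ : ℝ) : ℂ)) :
    RoC ρ = Cl1 ρ := by
  rw [RoC_eq_sInf]
  exact IsLeast.csInf_eq ⟨hρ.isRoCBound_Cl1, fun _ hs => hρ.Cl1_le_of_isRoCBound hφ hs⟩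

theorem roc_eq_l1_phase_alignable {d : ℕ} (hd : 2 ≤ d)
    (ρ : Matrix (Fin d) (Fin d) ℂ) (hρ : IsState ρ)
    (φ : Fin d → ℝ)
    (hφ : ∀ i j, Complex.exp (Complex.I * (φ i - φ j)) * ρ i j
      = ((‖ρ i j‖ : ℝ) : ℂ)) :
    RoC ρ = Cl1 ρ :=
  roc_eq_l1_phase_alignable_general ρ hρ φ hφ
end
end
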